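/- Let D be the m×m difference matrix. Then D is invertible, and the singular values of D^{-1} satisfy σ_j(D^{-1}) = 1 / (2 sin(π(j - 1/2)/(2m+1))) for j = 1, …, m (in descending order). -/

import Mathlib

open Matrix Real

/-- The m×m first-order difference matrix: 1's on the diagonal, -1's on the subdiagonal. -/
noncomputable def Dmat (m : ℕ) : Matrix (Fin m) (Fin m) ℝ :=
  Matrix.of fun i j => if (i : ℕ) = (j : ℕ) then 1 else if (i : ℕ) = (j : ℕ) + 1 then -1 else 0

/-- `σ` is the sequence of singular values of `A` listed in descending order:
it is antitone and is a rearrangement of the square roots of the eigenvalues of `Aᴴ * A`. -/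
noncomputable def IsDescSV {m k : ℕ} (A : Matrix (Fin m) (Fin k) ℝ) (σ : Fin k → ℝ) : Prop :=
  Antitone σ ∧ ∃ e : Equiv.Perm (Fin k),
    ∀ i, σ (e i) = Real.sqrt ((Matrix.isHermitian_conjTranspose_mul_self A).eigenvalues i)

/-!
For every `θ`, the vector `v i = cos ((2i+1)θ)` satisfies `(Dᵀ v) i = v i - v (i+1)` once
`cos ((2m+1)θ) = 0`, and then `D Dᵀ v = (2 sin θ)² v`: the boundary row of `D` is harmless
because `cos` is even, and the interior rows are the identity
`cos (x - 2θ) + cos (x + 2θ) = 2 cos 2θ cos x`.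
The angles `θ_j = π (j + 1/2) / (2m+1)`, `j < m`, lie in `(0, π/2)`, so these eigenvalues are
distinct and the `m` vectors form an eigenbasis of `D Dᵀ`. Hence `(D⁻¹)ᵀ D⁻¹ = (D Dᵀ)⁻¹` has
eigenvalues `(2 sin θ_j)⁻²`, whose square roots `1 / (2 sin θ_j)` are already in descending
order; a descending arrangement of a multiset is unique.
-/

section EigenvectorBasis

variable {n K : Type*} [Fintype n] [DecidableEq n] [Field K]

open Polynomial in
theorem Matrix.charpoly_eq_prod_of_mulVec_eq_smul (A : Matrix n n K) {μ : n → K}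
    (hμ : Function.Injective μ) {v : n → n → K} (hv : ∀ j, v j ≠ 0)
    (h : ∀ j, A *ᵥ v j = μ j • v j) :
    A.charpoly = ∏ j, (X - C (μ j)) := by
  set V : Matrix n n K := (Matrix.of v)ᵀ
  have hV : IsUnit V :=
    linearIndependent_cols_iff_isUnit.mp <|
      Module.End.eigenvectors_linearIndependent' (Matrix.toLin' A) μ hμ v fun j =>
        Module.End.hasEigenvector_iff.mpr
          ⟨Module.End.mem_eigenspace_iff.mpr (by simpa using h j), hv j⟩
  have hAV : A * V = V * diagonal μ := by
    ext i j
    rw [Matrix.mul_diagonal, mul_comm]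
    exact congrFun (h j) i
  have hA : A = hV.unit.val * diagonal μ * hV.unit.val⁻¹ := by
    rw [IsUnit.unit_spec, ← hAV, Matrix.mul_assoc,
      Matrix.mul_nonsing_inv _ ((isUnit_iff_isUnit_det V).mp hV), Matrix.mul_one]
  rw [hA, charpoly_units_conj, charpoly_diagonal]

theorem Matrix.inv_mulVec_eq_inv_smul {A : Matrix n n K} (hA : IsUnit A) {c : K} {v : n → K}
    (h : A *ᵥ v = c • v) : A⁻¹ *ᵥ v = c⁻¹ • v := by
  have hv : v = c • (A⁻¹ *ᵥ v) := by
    rw [← mulVec_smul, ← h, mulVec_mulVec, nonsing_inv_mul _ ((isUnit_iff_isUnit_det A).mp hA),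
      one_mulVec]
  rcases eq_or_ne c 0 with rfl | hc
  · rw [zero_smul] at hv
    rw [hv, mulVec_zero, smul_zero]
  · conv_rhs => rw [hv]
    rw [smul_smul, inv_mul_cancel₀ hc, one_smul]

end EigenvectorBasis

open Polynomial in
theorem Polynomial.roots_prod_X_sub_C_univ {n R : Type*} [Fintype n] [CommRing R] [IsDomain R]
    (f : n → R) : (∏ j, (X - C (f j))).roots = Multiset.map f Finset.univ.val := by
  rw [roots_prod _ _ (Finset.prod_ne_zero_iff.mpr fun j _ => X_sub_C_ne_zero (f j))]
  simp [Finset.univ.val.bind_singleton]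

theorem Matrix.IsHermitian.eigenvalues_map_eq {n 𝕜 : Type*} [Fintype n] [DecidableEq n]
    [RCLike 𝕜] {A : Matrix n n 𝕜} (hA : A.IsHermitian) {μ : n → ℝ} (hμ : Function.Injective μ)
    {v : n → n → 𝕜} (hv : ∀ j, v j ≠ 0) (h : ∀ j, A *ᵥ v j = (μ j : 𝕜) • v j) :
    Multiset.map hA.eigenvalues Finset.univ.val = Multiset.map μ Finset.univ.val := by
  have := hA.roots_charpoly_eq_eigenvalues
  rw [A.charpoly_eq_prod_of_mulVec_eq_smul (RCLike.ofReal_injective.comp hμ) hv h,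
    Polynomial.roots_prod_X_sub_C_univ, ← Multiset.map_map, ← Multiset.map_map] at this
  exact (Multiset.map_injective RCLike.ofReal_injective this).symm

theorem Antitone.eq_of_map_univ_eq {n : ℕ} {α : Type*} [PartialOrder α] {f g : Fin n → α}
    (hf : Antitone f) (hg : Antitone g)
    (h : Multiset.map f Finset.univ.val = Multiset.map g Finset.univ.val) : f = g := by
  rw [Fin.univ_val_map, Fin.univ_val_map, Multiset.coe_eq_coe] at h
  exact List.ofFn_injective <| h.eq_of_pairwise' (r := (· ≥ ·))
    (List.pairwise_ofFn.mpr fun _ _ hab => hf hab.le)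
    (List.pairwise_ofFn.mpr fun _ _ hab => hg hab.le)

theorem Dmat_apply {m : ℕ} (i j : Fin m) :
    Dmat m i j = (if (i : ℕ) = j then 1 else 0) - (if (i : ℕ) = j + 1 then 1 else 0) := by
  unfold Dmat
  split_ifs <;> simp_all

theorem det_Dmat (m : ℕ) : (Dmat m).det = 1 := by
  have hD : (Dmat m).IsLowerTriangular := fun i j (hij : (i : ℕ) < j) => by
    simp only [Dmat_apply]
    rw [if_neg (by omega), if_neg (by omega), sub_zero]
  rw [det_of_isLowerTriangular _ hD]
  exact Finset.prod_eq_one fun i _ => by simp [Dmat_apply]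

theorem Dmat_mulVec {m : ℕ} {w : ℤ → ℝ} (hw : w (-1) = 0) :
    Dmat m *ᵥ (fun j => w j) = fun i : Fin m => w i - w ((i : ℤ) - 1) := by
  ext i
  simp only [mulVec, dotProduct, Dmat_apply, sub_mul, ite_mul, one_mul, zero_mul,
    Finset.sum_sub_distrib, Fin.val_inj, Finset.sum_ite_eq, Finset.mem_univ, if_true]
  congr 1
  rcases i with ⟨_ | k, hk⟩
  · simpa using hw.symm
  · rw [Finset.sum_eq_single ⟨k, by omega⟩
      (fun j _ hj => if_neg fun h => hj (Fin.ext (by simp at h ⊢; omega))) (by simp)]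
    simp

theorem Dmat_transpose_mulVec {m : ℕ} {w : ℤ → ℝ} (hw : w m = 0) :
    (Dmat m)ᵀ *ᵥ (fun j => w j) = fun i : Fin m => w i - w ((i : ℤ) + 1) := by
  ext i
  simp only [mulVec, dotProduct, transpose_apply, Dmat_apply, sub_mul, ite_mul, one_mul,
    zero_mul, Finset.sum_sub_distrib, Fin.val_inj, Finset.sum_ite_eq', Finset.mem_univ, if_true]
  congr 1
  by_cases hi : (i : ℕ) + 1 < m
  · rw [Finset.sum_eq_single ⟨i + 1, hi⟩ (fun j _ hj => if_neg fun h => hj (Fin.ext h))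
      (by simp)]
    simp
  · rw [Finset.sum_eq_zero fun j _ => if_neg (by omega), show (i : ℤ) + 1 = m by omega, hw]

theorem Dmat_mul_transpose_mulVec_cos {m : ℕ} {θ : ℝ} (hθ : cos ((2 * m + 1) * θ) = 0) :
    (Dmat m * (Dmat m)ᵀ) *ᵥ (fun i : Fin m => cos ((2 * i + 1) * θ)) =
      (2 * sin θ) ^ 2 • fun i : Fin m => cos ((2 * i + 1) * θ) := by
  set u : ℤ → ℝ := fun a => cos ((2 * a + 1) * θ)
  have hu : u m = 0 := by simpa [u] using hθ
  have hw : u (-1) - u (-1 + 1) = 0 := by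
    simp only [u]
    push_cast
    rw [show (2 * (-1 : ℝ) + 1) * θ = -((2 * 0 + 1) * θ) by ring, cos_neg]
    norm_num
  rw [← mulVec_mulVec, show (fun i : Fin m => cos ((2 * i + 1) * θ)) = fun i : Fin m => u i by
    simp [u], Dmat_transpose_mulVec hu, Dmat_mulVec (w := fun a => u a - u (a + 1)) hw]
  ext i
  have hsum : u (i - 1) + u (i + 1) = 2 * cos (2 * θ) * u i := by
    simp only [u, Int.cast_sub, Int.cast_add, Int.cast_natCast, Int.cast_one]
    rw [show (2 * ((i : ℝ) - 1) + 1) * θ = (2 * i + 1) * θ - 2 * θ by ring,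
      show (2 * ((i : ℝ) + 1) + 1) * θ = (2 * i + 1) * θ + 2 * θ by ring, cos_sub, cos_add]
    ring
  simp only [Pi.smul_apply, smul_eq_mul, sub_add_cancel]
  rw [cos_two_mul, cos_sq'] at hsum
  linear_combination -hsum

noncomputable def diffAngle (m j : ℕ) : ℝ := π * (j + 1 / 2) / (2 * m + 1)

theorem cos_mul_diffAngle (m j : ℕ) : cos ((2 * m + 1) * diffAngle m j) = 0 := by
  rw [diffAngle, mul_div_cancel₀ _ (by positivity : (2 * m + 1 : ℝ) ≠ 0), mul_add,
    mul_comm π, ← mul_div_assoc, mul_one, cos_add_pi_div_two, sin_nat_mul_pi, neg_zero]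

theorem diffAngle_strictMono (m : ℕ) : StrictMono (diffAngle m) := fun j k hjk => by
  unfold diffAngle
  gcongr

theorem diffAngle_mem_Ioo {m j : ℕ} (hj : j < m) : diffAngle m j ∈ Set.Ioo 0 (π / 2) := by
  have hj' : (j : ℝ) + 1 ≤ m := by exact_mod_cast hj
  constructor
  · unfold diffAngle; positivity
  · rw [diffAngle, div_lt_iff₀ (by positivity)]
    nlinarith [pi_pos]

theorem sin_diffAngle_pos {m j : ℕ} (hj : j < m) : 0 < sin (diffAngle m j) :=
  sin_pos_of_pos_of_lt_pi (diffAngle_mem_Ioo hj).1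
    ((diffAngle_mem_Ioo hj).2.trans (by linarith [pi_pos]))

theorem sin_diffAngle_strictMono (m : ℕ) : StrictMono fun j : Fin m => sin (diffAngle m j) :=
  fun j k hjk => by
    have hj := diffAngle_mem_Ioo j.2
    have hk := diffAngle_mem_Ioo k.2
    exact strictMonoOn_sin ⟨by linarith [hj.1, pi_pos], hj.2.le⟩
      ⟨by linarith [hk.1, pi_pos], hk.2.le⟩ (diffAngle_strictMono m hjk)

theorem eigenvalues_conjTranspose_mul_self_inv_Dmat (m : ℕ) :
    Multiset.map (isHermitian_conjTranspose_mul_self (Dmat m)⁻¹).eigenvalues Finset.univ.val =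
      Multiset.map (fun j : Fin m => ((2 * sin (diffAngle m j)) ^ 2)⁻¹) Finset.univ.val := by
  have hD : IsUnit (Dmat m * (Dmat m)ᵀ) := by
    simp [isUnit_iff_isUnit_det, det_Dmat]
  have hmono : StrictMono fun j : Fin m => (2 * sin (diffAngle m j)) ^ 2 := fun j k hjk =>
    pow_lt_pow_left₀ (by linarith [sin_diffAngle_strictMono m hjk])
      (by linarith [sin_diffAngle_pos j.2]) two_ne_zero
  refine (isHermitian_conjTranspose_mul_self _).eigenvalues_map_eq
    (v := fun j (i : Fin m) => cos ((2 * i + 1) * diffAngle m j))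
    (inv_injective.comp hmono.injective) (fun j hv => ?_) (fun j => ?_)
  · have h0 := congrFun hv ⟨0, j.pos⟩
    simp only [CharP.cast_eq_zero, mul_zero, zero_add, one_mul, Pi.zero_apply] at h0
    exact (cos_pos_of_mem_Ioo ⟨by linarith [(diffAngle_mem_Ioo j.2).1, pi_pos],
      (diffAngle_mem_Ioo j.2).2⟩).ne' h0
  · rw [conjTranspose_eq_transpose_of_trivial, transpose_nonsing_inv, ← Matrix.mul_inv_rev]
    exact inv_mulVec_eq_inv_smul hD (Dmat_mul_transpose_mulVec_cos (cos_mul_diffAngle m j))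

theorem singular_values_of_inverse_difference_matrix_general (m : ℕ) :
    IsUnit (Dmat m) ∧
    ∀ σ : Fin m → ℝ, IsDescSV (Dmat m)⁻¹ σ →
      ∀ j : Fin m,
        σ j = 1 / (2 * Real.sin (Real.pi * ((j : ℕ) + 1 - 1/2) / (2 * m + 1))) := by
  refine ⟨(isUnit_iff_isUnit_det _).mpr (by simp [det_Dmat]), fun σ ⟨hσ, e, he⟩ j => ?_⟩
  have hsv : Multiset.map σ Finset.univ.val =
      Multiset.map (fun j : Fin m => 1 / (2 * sin (diffAngle m j))) Finset.univ.val :=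
    calc Multiset.map σ Finset.univ.val = Multiset.map (σ ∘ e) Finset.univ.val := by
          rw [← Multiset.map_map, Multiset.map_univ_val_equiv]
      _ = Multiset.map sqrt (Multiset.map
            (isHermitian_conjTranspose_mul_self (Dmat m)⁻¹).eigenvalues Finset.univ.val) := by
          rw [Multiset.map_map]
          exact Multiset.map_congr rfl fun i _ => he i
      _ = _ := by
          rw [eigenvalues_conjTranspose_mul_self_inv_Dmat, Multiset.map_map]
          refine Multiset.map_congr rfl fun k _ => ?_
          rw [Function.comp_apply, sqrt_inv, sqrt_sq (by linarith [sin_diffAngle_pos k.2]),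
            one_div]
  have hanti : Antitone fun j : Fin m => 1 / (2 * sin (diffAngle m j)) := fun j k hjk =>
    one_div_le_one_div_of_le (by linarith [sin_diffAngle_pos j.2])
      (by linarith [(sin_diffAngle_strictMono m).monotone hjk])
  rw [hσ.eq_of_map_univ_eq hanti hsv]
  unfold diffAngle
  ring_nf

/-- The difference matrix `D` is invertible and the singular values of `D⁻¹` are
`σ_j(D⁻¹) = 1 / (2 sin(π (j - 1/2) / (2m+1)))`, `j = 1, …, m`, in descending order. -/
theorem singular_values_of_inverse_difference_matrix (m : ℕ) (hm : 0 < m) :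
    IsUnit (Dmat m) ∧
    ∀ σ : Fin m → ℝ, IsDescSV (Dmat m)⁻¹ σ →
      ∀ j : Fin m,
        σ j = 1 / (2 * Real.sin (Real.pi * ((j : ℕ) + 1 - 1/2) / (2 * m + 1))) :=
  singular_values_of_inverse_difference_matrix_general m
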